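/- Let G be a group, N a normal subgroup of G of finite index, and φ̃ a finite-dimensional complex representation of G whose restriction φ := φ̃|_N to N is irreducible. Then every finite-dimensional irreducible complex representation τ of G whose restriction to N contains φ (i.e., Hom_N(φ, τ|_N) ≠ 0) is isomorphic to ρ ⊗ φ̃ for some finite-dimensional irreducible complex representation ρ of G on which N acts trivially. -/

import Mathlib

open TensorProduct

/-- A representation is irreducible if the space is nonzero and the only invariant
subspaces are `⊥` and `⊤`. -/
def Representation.IsIrreducibleRep {k G V : Type*} [CommSemiring k] [Monoid G]
    [AddCommMonoid V] [Module k V] (ρ : Representation k G V) : Prop :=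
  (∃ v : V, v ≠ 0) ∧
    ∀ p : Submodule k V, (∀ g : G, ∀ x ∈ p, ρ g x ∈ p) → p = ⊥ ∨ p = ⊤

/-!
Let `U = Hom_N(φ, τ|_N)`. The group `G` acts on `U` by conjugation, `N` acting trivially, and
evaluation `U ⊗ φ̃ → τ` is `G`-equivariant. It is surjective because `τ` is irreducible and
`U ≠ 0`. It is injective because, after choosing a basis of `U`, a nonzero `N`-stable subspace
of the kernel sitting in `V^k` contains an irreducible subrepresentation, whose coordinates are
proportional to each other by Schur's lemma; the proportionality constants then give a linear
relation between the basis vectors. Hence `τ ≅ U ⊗ φ̃`, which forces `U` to be irreducible.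
-/

noncomputable section

namespace Representation

section CommSemiring

variable {k G V W : Type*} [CommSemiring k] [Monoid G] [AddCommMonoid V] [Module k V]
  [AddCommMonoid W] [Module k W] {ρ : Representation k G V} {σ : Representation k G W}

namespace IsIrreducibleRep

theorem surjective (hσ : σ.IsIrreducibleRep) (f : IntertwiningMap ρ σ) (hf : f ≠ 0) :
    Function.Surjective f := by
  have hinv : ∀ g, ∀ w ∈ LinearMap.range f.toLinearMap, σ g w ∈ LinearMap.range f.toLinearMap := by
    rintro g _ ⟨v, rfl⟩
    exact ⟨ρ g v, IntertwiningMap.isIntertwining _ _ f g v⟩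
  rcases hσ.2 _ hinv with h | h
  · exact absurd (IntertwiningMap.ext (LinearMap.range_eq_bot.1 h)) hf
  · exact LinearMap.range_eq_top.1 h

theorem of_equiv (e : ρ.Equiv σ) (hσ : σ.IsIrreducibleRep) : ρ.IsIrreducibleRep := by
  obtain ⟨⟨w, hw⟩, h⟩ := hσ
  refine ⟨⟨e.symm w, by simpa using hw⟩, fun p hp => ?_⟩
  have hinv : ∀ g, ∀ x ∈ p.comap e.symm.toLinearMap, σ g x ∈ p.comap e.symm.toLinearMap := by
    intro g x hx
    show e.symm (σ g x) ∈ p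
    rw [← Equiv.coe_toIntertwiningMap, IntertwiningMap.isIntertwining]
    exact hp g _ hx
  rcases h _ hinv with h' | h'
  · left
    refine eq_bot_iff.2 fun x hx => ?_
    have : e x ∈ p.comap e.symm.toLinearMap := by simpa [Submodule.mem_comap] using hx
    simpa [h'] using this
  · right
    refine eq_top_iff.2 fun x _ => ?_
    simpa [Submodule.mem_comap] using h'.ge (Submodule.mem_top : e x ∈ _)

end IsIrreducibleRep

end CommSemiring

variable {k G V W U : Type*} [Field k] [AddCommGroup V] [Module k V]
  [AddCommGroup W] [Module k W] [AddCommGroup U] [Module k U]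

section Monoid

variable [Monoid G] {ρ : Representation k G V} {σ : Representation k G W}

theorem isIrreducibleRep_iff_isIrreducible (ρ : Representation k G V) :
    ρ.IsIrreducibleRep ↔ ρ.IsIrreducible := by
  constructor
  · rintro ⟨⟨v, hv⟩, h⟩
    refine { toNontrivial := ⟨⊥, ⊤, fun hbt => hv ?_⟩, eq_bot_or_eq_top := fun p => ?_ }
    · have : v ∈ (⊥ : Subrepresentation ρ).toSubmodule := by rw [hbt]; trivial
      exact this
    · rcases h p.toSubmodule p.apply_mem_toSubmodule with hp | hp
      · exact Or.inl (Subrepresentation.toSubmodule_injective hp)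
      · exact Or.inr (Subrepresentation.toSubmodule_injective hp)
  · intro h
    refine ⟨?_, fun p hp => ?_⟩
    · by_contra! h0
      exact bot_ne_top (Subrepresentation.toSubmodule_injective
        (eq_top_iff.2 fun v _ => (h0 v).symm ▸ zero_mem _) : (⊥ : Subrepresentation ρ) = ⊤)
    · rcases eq_bot_or_eq_top (⟨p, hp⟩ : Subrepresentation ρ) with h' | h'
      · exact Or.inl (congrArg Subrepresentation.toSubmodule h')
      · exact Or.inr (congrArg Subrepresentation.toSubmodule h')

namespace IsIrreducibleRep

theorem injective (hρ : ρ.IsIrreducibleRep) (f : IntertwiningMap ρ σ) (hf : f ≠ 0) :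
    Function.Injective f :=
  have := (isIrreducibleRep_iff_isIrreducible ρ).1 hρ
  (IsIrreducible.injective_or_eq_zero f).resolve_right hf

theorem exists_eq_smul [IsAlgClosed k] [FiniteDimensional k V] (hρ : ρ.IsIrreducibleRep)
    (f : IntertwiningMap ρ ρ) : ∃ c : k, ∀ v, f v = c • v := by
  have := (isIrreducibleRep_iff_isIrreducible ρ).1 hρ
  obtain ⟨c, rfl⟩ := IsIrreducible.algebraMap_intertwiningMap_bijective_of_isAlgClosed.2 f
  exact ⟨c, fun v => rfl⟩

theorem of_tprod_left [FiniteDimensional k U] [FiniteDimensional k V]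
    {σ : Representation k G U} (h : (σ.tprod ρ).IsIrreducibleRep) : σ.IsIrreducibleRep := by
  have hpos : 0 < Module.finrank k U * Module.finrank k V := by
    rw [← Module.finrank_tensorProduct]
    exact Module.finrank_pos_iff_exists_ne_zero.2 h.1
  have hV : 0 < Module.finrank k V := pos_of_mul_pos_right hpos (Nat.zero_le _)
  refine ⟨Module.finrank_pos_iff_exists_ne_zero.1 (pos_of_mul_pos_left hpos (Nat.zero_le _)),
    fun p hp => ?_⟩
  have hinj : Function.Injective (p.subtype.rTensor V) :=
    Module.Flat.rTensor_preserves_injective_linearMap _ p.injective_subtype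
  have hinv : ∀ g, ∀ t ∈ LinearMap.range (p.subtype.rTensor V),
      σ.tprod ρ g t ∈ LinearMap.range (p.subtype.rTensor V) := by
    rintro g _ ⟨t, rfl⟩
    refine ⟨TensorProduct.map ((σ g).restrict (hp g)) (ρ g) t, ?_⟩
    rw [tprod_apply, ← LinearMap.comp_apply, ← LinearMap.comp_apply (TensorProduct.map _ _),
      LinearMap.rTensor_comp_map, LinearMap.map_comp_rTensor]
    rfl
  have hrank := LinearMap.finrank_range_of_inj hinj
  rw [Module.finrank_tensorProduct] at hrank
  rcases h.2 _ hinv with h' | h'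
  · rw [h', finrank_bot] at hrank
    exact Or.inl (Submodule.finrank_eq_zero.1
      ((mul_eq_zero.1 hrank.symm).resolve_right (Nat.pos_iff_ne_zero.1 hV)))
  · rw [h', finrank_top, Module.finrank_tensorProduct] at hrank
    exact Or.inr (Submodule.eq_top_of_finrank_eq (Nat.eq_of_mul_eq_mul_right hV hrank.symm))

end IsIrreducibleRep

theorem exists_isIrreducibleRep_subrepresentation [FiniteDimensional k V]
    (ρ : Representation k G V) {K : Submodule k V} (hK : ∀ g, K ≤ K.comap (ρ g)) (hK0 : K ≠ ⊥) :
    ∃ Y ≤ K, ∃ hY : ∀ g, Y ≤ Y.comap (ρ g), (ρ.subrepresentation Y hY).IsIrreducibleRep := by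
  obtain ⟨Y, ⟨hYK, hY0, hY⟩, hmin⟩ := wellFounded_lt.has_min
    {Y : Submodule k V | Y ≤ K ∧ Y ≠ ⊥ ∧ ∀ g, Y ≤ Y.comap (ρ g)} ⟨K, le_rfl, hK0, hK⟩
  refine ⟨Y, hYK, hY, ?_, fun p hp => ?_⟩
  · obtain ⟨y, hy, hy0⟩ := Submodule.exists_mem_ne_zero_of_ne_bot hY0
    exact ⟨⟨y, hy⟩, fun h => hy0 (congrArg Subtype.val h)⟩
  by_cases hp0 : p = ⊥
  · exact Or.inl hp0
  right
  have hle : p.map Y.subtype ≤ Y := Submodule.map_subtype_le Y p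
  have hinv : ∀ g, p.map Y.subtype ≤ (p.map Y.subtype).comap (ρ g) := by
    rintro g _ ⟨y, hy, rfl⟩
    exact ⟨_, hp g y hy, rfl⟩
  have hne : p.map Y.subtype ≠ ⊥ := fun h => hp0 <|
    Submodule.map_injective_of_injective Y.injective_subtype (h.trans (Submodule.map_bot _).symm)
  have heq : p.map Y.subtype = Y := hle.eq_of_not_lt (hmin _ ⟨hle.trans hYK, hne, hinv⟩)
  exact Submodule.map_injective_of_injective Y.injective_subtype
    (heq.trans (Submodule.map_subtype_top Y).symm)

variable (ρ) in
def pi (ι : Type*) : Representation k G (ι → V) where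
  toFun g := LinearMap.piMap fun _ => ρ g
  map_one' := by ext; simp
  map_mul' _ _ := by ext; simp

@[simp]
theorem pi_apply_apply {ι : Type*} (g : G) (y : ι → V) (i : ι) : ρ.pi ι g y i = ρ g (y i) := rfl

namespace IsIrreducibleRep

variable [IsAlgClosed k] [FiniteDimensional k V]

theorem exists_smul_mem {ι : Type*} [Finite ι] (hρ : ρ.IsIrreducibleRep)
    {K : Submodule k (ι → V)} (hK : ∀ g, K ≤ K.comap (ρ.pi ι g)) (hK0 : K ≠ ⊥) :
    ∃ c : ι → k, c ≠ 0 ∧ ∀ x : V, (fun i => c i • x) ∈ K := by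
  obtain ⟨Y, hYK, hY, hYirr⟩ := exists_isIrreducibleRep_subrepresentation (ρ.pi ι) hK hK0
  let π (i : ι) : IntertwiningMap ((ρ.pi ι).subrepresentation Y hY) ρ :=
    ⟨LinearMap.proj i ∘ₗ Y.subtype, fun _ => rfl⟩
  obtain ⟨i₀, hi₀⟩ : ∃ i, π i ≠ 0 := by
    obtain ⟨⟨y, hy⟩, hy0⟩ := hYirr.1
    obtain ⟨i, hi⟩ := Function.ne_iff.1 (fun h => hy0 (Subtype.ext h))
    exact ⟨i, fun h => hi (congrArg (· ⟨y, hy⟩) h)⟩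
  let e := (π i₀).ofBijective ⟨hYirr.injective _ hi₀, hρ.surjective _ hi₀⟩
  choose c hc using fun i => hρ.exists_eq_smul ((π i).comp e.symm.toIntertwiningMap)
  obtain ⟨x₀, hx₀⟩ := hρ.1
  have hc₀ : c i₀ = 1 := smul_left_injective k hx₀ <| by
    show c i₀ • x₀ = (1 : k) • x₀
    rw [one_smul]
    exact (hc i₀ x₀).symm.trans (e.apply_symm_apply x₀)
  refine ⟨c, fun h => one_ne_zero (hc₀.symm.trans (congrFun h i₀)), fun x => ?_⟩
  have : (fun i => c i • x) = (e.symm x : ι → V) := funext fun i => (hc i x).symm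
  exact this ▸ hYK (e.symm x).2

theorem eq_zero_of_sum_apply_eq_zero {ι : Type*} [Fintype ι] (hρ : ρ.IsIrreducibleRep)
    {f : ι → V →ₗ[k] W} (hf : LinearIndependent k f) (hfρ : ∀ i, IsIntertwiningMap ρ σ (f i))
    {v : ι → V} (hv : ∑ i, f i (v i) = 0) : v = 0 := by
  let L : (ι → V) →ₗ[k] W := ∑ i, f i ∘ₗ LinearMap.proj i
  have hL (y : ι → V) : L y = ∑ i, f i (y i) := by simp [L]
  have hK : ∀ g, LinearMap.ker L ≤ (LinearMap.ker L).comap (ρ.pi ι g) := by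
    intro g y hy
    simp only [Submodule.mem_comap, LinearMap.mem_ker, hL, pi_apply_apply,
      (hfρ _).isIntertwining, ← map_sum] at hy ⊢
    rw [hy, map_zero]
  by_contra hv0
  obtain ⟨c, hc0, hc⟩ := hρ.exists_smul_mem hK
    (fun h => hv0 (by simpa [h] using (LinearMap.mem_ker.2 ((hL v).trans hv))))
  refine hc0 (funext (Fintype.linearIndependent_iff.1 hf c (LinearMap.ext fun x => ?_)))
  simpa [hL] using hc x

theorem injective_lift_subtype (hρ : ρ.IsIrreducibleRep) {U : Submodule k (V →ₗ[k] W)}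
    [FiniteDimensional k U] (hU : ∀ f ∈ U, IsIntertwiningMap ρ σ f) :
    Function.Injective (TensorProduct.lift U.subtype) := by
  refine (injective_iff_map_eq_zero _).2 fun t ht => ?_
  let b := Module.finBasis k U
  obtain ⟨c, rfl⟩ := TensorProduct.eq_repr_basis_left b t
  have : c = 0 := Finsupp.ext <| congrFun <| hρ.eq_zero_of_sum_apply_eq_zero
    (f := fun i => (b i : V →ₗ[k] W)) (b.linearIndependent.map' U.subtype U.ker_subtype)
    (fun i => hU _ (b i).2) (by simpa [Finsupp.sum_fintype] using ht)
  simp [this]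

end IsIrreducibleRep

def ofLinearEquiv (ρ : Representation k G V) (e : V ≃ₗ[k] W) : Representation k G W :=
  (e.conjAlgEquiv k : Module.End k V →* Module.End k W).comp ρ

def equivOfLinearEquiv (ρ : Representation k G V) (e : V ≃ₗ[k] W) :
    ρ.Equiv (ρ.ofLinearEquiv e) :=
  .mk e fun g => by ext; simp [ofLinearEquiv]

def Equiv.rTensor (ρ : Representation k G V) {σ' : Representation k G U} (e : σ.Equiv σ') :
    (σ.tprod ρ).Equiv (σ'.tprod ρ) :=
  .mk (e.toLinearEquiv.rTensor V) fun g => TensorProduct.ext' fun w v => by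
    show e.toLinearEquiv (σ g w) ⊗ₜ ρ g v = σ' g (e.toLinearEquiv w) ⊗ₜ ρ g v
    rw [Equiv.toLinearEquiv_apply, Equiv.toLinearEquiv_apply, IntertwiningMap.isIntertwining]

end Monoid

section Normal

variable [Group G]

def subrepresentationLinHomEval (ρ : Representation k G V) (σ : Representation k G W)
    (Y : Submodule k (V →ₗ[k] W)) (hY : ∀ g, Y ≤ Y.comap (linHom ρ σ g)) :
    IntertwiningMap (((linHom ρ σ).subrepresentation Y hY).tprod ρ) σ where
  toLinearMap := TensorProduct.lift Y.subtype
  isIntertwining' g := TensorProduct.ext' fun f v => by simp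

theorem bijective_subrepresentationLinHomEval_toInvariants [IsAlgClosed k]
    [FiniteDimensional k V] [FiniteDimensional k W] (N : Subgroup G) [N.Normal]
    {ρ : Representation k G V} {σ : Representation k G W}
    (hρ : IsIrreducibleRep (ρ.comp N.subtype)) (hσ : σ.IsIrreducibleRep)
    (hne : ∃ f : V →ₗ[k] W, f ≠ 0 ∧ IsIntertwiningMap (ρ.comp N.subtype) (σ.comp N.subtype) f) :
    Function.Bijective
      (subrepresentationLinHomEval ρ σ _ (le_comap_invariants (linHom ρ σ) N)) := by
  have hmem (f : V →ₗ[k] W) : f ∈ invariants ((linHom ρ σ).comp N.subtype) ↔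
      IsIntertwiningMap (ρ.comp N.subtype) (σ.comp N.subtype) f :=
    mem_linHom_invariants_iff_isIntertwining (ρ := ρ.comp N.subtype) (σ := σ.comp N.subtype) f
  obtain ⟨f, hf0, hf⟩ := hne
  refine ⟨hρ.injective_lift_subtype fun f hf => (hmem f).1 hf, hσ.surjective _ ?_⟩
  obtain ⟨x, hx⟩ := DFunLike.ne_iff.1 hf0
  exact DFunLike.ne_iff.2 ⟨⟨f, (hmem f).2 hf⟩ ⊗ₜ x, hx⟩

end Normal

end Representation

end

theorem irreducible_extension_eq_twist {G : Type*} [Group G]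
    (N : Subgroup G) [N.Normal]
    {V : Type*} [AddCommGroup V] [Module ℂ V] [FiniteDimensional ℂ V]
    (φext : Representation ℂ G V)
    (hφ : Representation.IsIrreducibleRep (MonoidHom.comp φext N.subtype))
    {W : Type*} [AddCommGroup W] [Module ℂ W] [FiniteDimensional ℂ W]
    (τ : Representation ℂ G W) (hτ : Representation.IsIrreducibleRep τ)
    (hHom : ∃ f : V →ₗ[ℂ] W, f ≠ 0 ∧ ∀ (n : ↥N) (x : V), f (φext ↑n x) = τ ↑n (f x)) :
    ∃ (n : ℕ) (ρ : Representation ℂ G (Fin n → ℂ)),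
      Representation.IsIrreducibleRep ρ ∧ (∀ m : ↥N, ρ ↑m = 1) ∧
        ∃ e : W ≃ₗ[ℂ] ((Fin n → ℂ) ⊗[ℂ] V),
          ∀ (g : G) (x : W), e (τ g x) = (ρ.tprod φext) g (e x) := by
  obtain ⟨f, hf0, hfN⟩ := hHom
  let σ := Representation.toInvariants (Representation.linHom φext τ) N
  let E := (Representation.subrepresentationLinHomEval φext τ _ _).ofBijective
    (Representation.bijective_subrepresentationLinHomEval_toInvariants N hφ hτ ⟨f, hf0, ⟨hfN⟩⟩)
  have hσ : σ.IsIrreducibleRep := (hτ.of_equiv E).of_tprod_left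
  let b := σ.equivOfLinearEquiv (Module.finBasis ℂ _).equivFun
  let E' := E.symm.trans (b.rTensor φext)
  refine ⟨_, _, hσ.of_equiv b.symm, fun m => ?_, E'.toLinearEquiv, E'.isIntertwining⟩
  have hm : σ m = 1 := Representation.isTrivial_def (σ.comp N.subtype) m
  simp only [Representation.ofLinearEquiv, MonoidHom.comp_apply, hm, map_one]
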